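/- Let f_1,...,f_k be C^1 diffeomorphisms of the circle generating a forward and backward minimal IFS. If IFS(f_1,...,f_k) has a hyperbolic attracting periodic point, then the hyperbolic attracting periodic points of IFS(f_1,...,f_k) are dense in S^1. -/

import Mathlib

/-!
Let `H` be a lift of the return map of the attracting periodic point `x₀`; it contracts a closed
ball around `x₀`. Given a target `q`, backward minimality gives a point `y₀` near `q` and a word
`g` with `g y₀ = x₀`, and forward minimality a word `c` with `c x₀` close to `y₀` (all mod 1).
Choose first a ball `B` around `y₀` that `g` maps into the basin of `x₀`, then `c`, then `n` so
large that `c ∘ H^[n] ∘ g` maps `B` into its interior with Lipschitz constant `< 1`. By the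
intermediate value theorem it has a fixed point in `B`: a hyperbolic attracting periodic point
close to `q`.
-/

open Set

/-- Composition of generators (given by degree-one lifts) along a finite word:
`[i₁, ..., iₙ] ↦ f_{iₙ} ∘ ... ∘ f_{i₁}`. -/
def listComp {k : ℕ} (f : Fin k → ℝ → ℝ) (l : List (Fin k)) : ℝ → ℝ :=
  fun x => l.foldl (fun y i => f i y) x

open Filter Topology Metric Function
open scoped NNReal

theorem exists_isFixedPt_abs_deriv_lt_one {Ψ : ℝ → ℝ} {y ρ : ℝ} {K : ℝ≥0} (hρ : 0 ≤ ρ)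
    (hK : K < 1) (hΨ : LipschitzOnWith K Ψ (closedBall y ρ))
    (hmaps : MapsTo Ψ (closedBall y ρ) (ball y ρ)) :
    ∃ z ∈ ball y ρ, IsFixedPt Ψ z ∧ |deriv Ψ z| < 1 := by
  have hend : ∀ t ∈ closedBall y ρ, |Ψ t - y| < ρ := fun t ht => by
    simpa [Real.dist_eq] using hmaps ht
  have hleft := abs_lt.mp (hend (y - ρ) (by simp [abs_of_nonneg hρ]))
  have hright := abs_lt.mp (hend (y + ρ) (by simp [abs_of_nonneg hρ]))
  obtain ⟨z, hz, hfix⟩ : ∃ z ∈ Icc (y - ρ) (y + ρ), Ψ z - z = 0 := by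
    refine intermediate_value_Icc' (by linarith) ?_ ⟨by linarith, by linarith⟩
    rw [← Real.closedBall_eq_Icc]
    exact hΨ.continuousOn.sub continuousOn_id
  rw [← Real.closedBall_eq_Icc] at hz
  have hzball : z ∈ ball y ρ := sub_eq_zero.mp hfix ▸ hmaps hz
  refine ⟨z, hzball, sub_eq_zero.mp hfix, ?_⟩
  calc |deriv Ψ z| ≤ K := norm_deriv_le_of_lipschitzOn (closedBall_mem_nhds_of_mem hzball) hΨ
    _ < 1 := hK

theorem exists_lipschitzOnWith_closedBall_of_abs_deriv_lt_one {H : ℝ → ℝ} {x : ℝ}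
    (hH : ContDiffAt ℝ 1 H x) (hx : |deriv H x| < 1) :
    ∃ μ : ℝ≥0, μ < 1 ∧ ∃ δ > 0, LipschitzOnWith μ H (closedBall x δ) := by
  obtain ⟨μ, hxμ, hμ⟩ := exists_between (show ‖fderiv ℝ H x‖₊ < 1 by
    rw [← NNReal.coe_lt_coe, coe_nnnorm, ← norm_deriv_eq_norm_fderiv]; simpa using hx)
  obtain ⟨t, ht, hlip⟩ := hH.exists_lipschitzOnWith_of_nnnorm_lt μ hxμ
  obtain ⟨δ, hδ, hδt⟩ := nhds_basis_closedBall.mem_iff.mp ht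
  exact ⟨μ, hμ, δ, hδ, hlip.mono hδt⟩

theorem LipschitzOnWith.mapsTo_closedBall_of_isFixedPt {H : ℝ → ℝ} {x δ : ℝ} {μ : ℝ≥0}
    (hμ : μ ≤ 1) (hH : LipschitzOnWith μ H (closedBall x δ)) (hx : IsFixedPt H x) :
    MapsTo H (closedBall x δ) (closedBall x δ) := fun y hy => by
  have hxδ : x ∈ closedBall x δ := mem_closedBall_self (nonneg_of_mem_closedBall hy)
  calc dist (H y) x = dist (H y) (H x) := by rw [hx.eq]
    _ ≤ μ * dist y x := hH.dist_le_mul y hy x hxδ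
    _ ≤ 1 * δ := mul_le_mul (by exact_mod_cast hμ) hy dist_nonneg zero_le_one
    _ = δ := one_mul δ

theorem LipschitzOnWith.iterate_of_mapsTo {α : Type*} [PseudoEMetricSpace α] {H : α → α}
    {s : Set α} {μ : ℝ≥0} (hH : LipschitzOnWith μ H s) (hs : MapsTo H s s) :
    ∀ n : ℕ, LipschitzOnWith (μ ^ n) H^[n] s
  | 0 => by simpa using LipschitzWith.id.lipschitzOnWith
  | n + 1 => by
    rw [pow_succ, iterate_succ]; exact (hH.iterate_of_mapsTo hs n).comp hH hs

theorem exists_comp_iterate_comp_isFixedPt {P : (ℝ → ℝ) → Prop} {H g : ℝ → ℝ} {x y ε : ℝ}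
    (hH : ContDiff ℝ 1 H) (hHx : IsFixedPt H x) (hHx' : |deriv H x| < 1)
    (hg : ContDiff ℝ 1 g) (hgy : g y = x) (hε : 0 < ε)
    (hP : ∀ ρ > 0, ∃ c, P c ∧ ContDiff ℝ 1 c ∧ dist (c x) y < ρ) :
    ∃ c, P c ∧ ∃ n : ℕ, ∃ z ∈ ball y ε, IsFixedPt (c ∘ H^[n] ∘ g) z ∧
      |deriv (c ∘ H^[n] ∘ g) z| < 1 := by
  obtain ⟨μ, hμ, δ, hδ, hHlip⟩ :=
    exists_lipschitzOnWith_closedBall_of_abs_deriv_lt_one hH.contDiffAt hHx'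
  have hHmaps := hHlip.mapsTo_closedBall_of_isFixedPt hμ.le hHx
  obtain ⟨ρ, hρ, hρsub⟩ := nhds_basis_closedBall.mem_iff.mp <| inter_mem (ball_mem_nhds y hε)
    (hg.continuous.continuousAt.preimage_mem_nhds (by rw [hgy]; exact closedBall_mem_nhds x hδ))
  have hgmaps : MapsTo g (closedBall y ρ) (closedBall x δ) := fun z hz => (hρsub hz).2
  obtain ⟨C, hglip⟩ := hg.contDiffOn.exists_lipschitzOnWith one_ne_zero
    (convex_closedBall y ρ) (isCompact_closedBall y ρ)
  obtain ⟨c, hPc, hc, hcx⟩ := hP (ρ / 2) (half_pos hρ)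
  obtain ⟨C', hclip⟩ := hc.contDiffOn.exists_lipschitzOnWith one_ne_zero
    (convex_closedBall x δ) (isCompact_closedBall x δ)
  have hκ : Tendsto (fun n : ℕ => C' * μ ^ n) atTop (𝓝 0) := by
    simpa using (NNReal.tendsto_pow_atTop_nhds_zero_of_lt_one hμ).const_mul C'
  have hκδ : Tendsto (fun n : ℕ => ((C' * μ ^ n : ℝ≥0) : ℝ) * δ) atTop (𝓝 0) := by
    simpa using (NNReal.tendsto_coe.mpr hκ).mul_const δ
  have hκC : Tendsto (fun n : ℕ => C' * μ ^ n * C) atTop (𝓝 0) := by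
    simpa using hκ.mul_const C
  obtain ⟨n, hnδ, hnC⟩ := ((hκδ.eventually_lt_const (half_pos hρ)).and
    (hκC.eventually_lt_const one_pos)).exists
  have hΘlip : LipschitzOnWith (C' * μ ^ n) (c ∘ H^[n]) (closedBall x δ) :=
    hclip.comp (hHlip.iterate_of_mapsTo hHmaps n) (hHmaps.iterate n)
  have hΨmaps : MapsTo (c ∘ H^[n] ∘ g) (closedBall y ρ) (ball y ρ) := fun z hz => by
    have hΘx : (c ∘ H^[n]) x = c x := congrArg c (hHx.iterate n).eq
    have hxδ : x ∈ closedBall x δ := mem_closedBall_self hδ.le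
    calc dist ((c ∘ H^[n]) (g z)) y
        ≤ dist ((c ∘ H^[n]) (g z)) ((c ∘ H^[n]) x) + dist (c x) y := hΘx ▸ dist_triangle _ _ _
      _ ≤ (C' * μ ^ n : ℝ≥0) * δ + dist (c x) y := by
          gcongr
          exact (hΘlip.dist_le_mul _ (hgmaps hz) x hxδ).trans
            (mul_le_mul_of_nonneg_left (hgmaps hz) (NNReal.coe_nonneg _))
      _ < ρ / 2 + ρ / 2 := add_lt_add hnδ hcx
      _ = ρ := add_halves ρ
  obtain ⟨z, hz, hfix, hderiv⟩ :=
    exists_isFixedPt_abs_deriv_lt_one hρ.le hnC (hΘlip.comp hglip hgmaps) hΨmaps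
  exact ⟨c, hPc, n, z, (hρsub (ball_subset_closedBall hz)).1, hfix, hderiv⟩

theorem AddCircle.coe_eq_coe_iff_exists_int {a b : ℝ} :
    (a : AddCircle (1 : ℝ)) = b ↔ ∃ n : ℤ, a = b + n := by
  rw [← sub_eq_zero, ← AddCircle.coe_sub, AddCircle.coe_eq_zero_iff]
  exact exists_congr fun n => by rw [zsmul_one]; constructor <;> intro h <;> linarith

theorem map_add_int_of_map_add_one {φ : ℝ → ℝ} (hφ : ∀ x, φ (x + 1) = φ x + 1) (x : ℝ) (n : ℤ) :
    φ (x + n) = φ x + n := by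
  induction n using Int.induction_on generalizing x with
  | zero => simp
  | succ n ih => push_cast at ih ⊢; rw [← add_assoc, hφ, ih]; ring
  | pred n ih =>
    have := hφ (x + (-n - 1 : ℝ))
    push_cast at ih ⊢
    rw [show x + (-n - 1) + 1 = x + -n by ring, ih] at this
    linarith

section listComp

variable {k : ℕ} {f : Fin k → ℝ → ℝ}

theorem listComp_cons (i : Fin k) (l : List (Fin k)) :
    listComp f (i :: l) = listComp f l ∘ f i :=
  rfl

theorem listComp_append (a b : List (Fin k)) :
    listComp f (a ++ b) = listComp f b ∘ listComp f a :=
  funext fun _ => List.foldl_append ..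

theorem listComp_contDiff (hf : ∀ i, ContDiff ℝ 1 (f i)) :
    ∀ l : List (Fin k), ContDiff ℝ 1 (listComp f l)
  | [] => contDiff_id
  | i :: l => listComp_cons (f := f) i l ▸ (listComp_contDiff hf l).comp (hf i)

theorem listComp_add_int (hlift : ∀ i x, f i (x + 1) = f i x + 1) :
    ∀ (l : List (Fin k)) (x : ℝ) (n : ℤ), listComp f l (x + n) = listComp f l x + n
  | [], _, _ => rfl
  | i :: l, x, n => by
    rw [listComp_cons, comp_apply, comp_apply, map_add_int_of_map_add_one (hlift i),
      listComp_add_int hlift l]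

theorem listComp_reverse_listComp {finv : Fin k → ℝ → ℝ} (hinv : ∀ i x, f i (finv i x) = x) :
    ∀ (l : List (Fin k)) (x : ℝ), listComp f l.reverse (listComp finv l x) = x
  | [], _ => rfl
  | i :: l, x => by
    rw [List.reverse_cons, listComp_append, comp_apply, listComp_cons (f := finv), comp_apply,
      listComp_reverse_listComp hinv l]
    exact hinv i x

end listComp

/-- Lifts to `ℝ` of the elements of the semigroup generated by the `f i`; on the circle a lift is
only determined up to an integer translation. -/
def IsWordLift {k : ℕ} (f : Fin k → ℝ → ℝ) (Ψ : ℝ → ℝ) : Prop :=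
  ∃ l : List (Fin k), l ≠ [] ∧ ∃ N : ℤ, Ψ = fun x => listComp f l x + N

namespace IsWordLift

variable {k : ℕ} {f : Fin k → ℝ → ℝ} {Ψ Φ : ℝ → ℝ}

theorem contDiff (hf : ∀ i, ContDiff ℝ 1 (f i)) (hΨ : IsWordLift f Ψ) : ContDiff ℝ 1 Ψ := by
  obtain ⟨l, -, N, rfl⟩ := hΨ
  exact (listComp_contDiff hf l).add contDiff_const

theorem comp (hlift : ∀ i x, f i (x + 1) = f i x + 1) (hΨ : IsWordLift f Ψ)
    (hΦ : IsWordLift f Φ) : IsWordLift f (Ψ ∘ Φ) := by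
  obtain ⟨l, hl, N, rfl⟩ := hΨ
  obtain ⟨l', -, N', rfl⟩ := hΦ
  refine ⟨l' ++ l, by simp [hl], N' + N, funext fun x => ?_⟩
  simp only [comp_apply, listComp_append, listComp_add_int hlift]
  push_cast
  ring

theorem iterate_comp (hlift : ∀ i x, f i (x + 1) = f i x + 1) (hΨ : IsWordLift f Ψ)
    (hΦ : IsWordLift f Φ) : ∀ n : ℕ, IsWordLift f (Ψ^[n] ∘ Φ)
  | 0 => hΦ
  | n + 1 => by
    rw [iterate_succ', comp_assoc]
    exact hΨ.comp hlift (iterate_comp hlift hΨ hΦ n)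

theorem exists_leftInverse {finv : Fin k → ℝ → ℝ} (hlift : ∀ i x, f i (x + 1) = f i x + 1)
    (hinv : ∀ i x, f i (finv i x) = x) (hΨ : IsWordLift finv Ψ) :
    ∃ Φ, IsWordLift f Φ ∧ LeftInverse Φ Ψ := by
  obtain ⟨l, hl, N, rfl⟩ := hΨ
  refine ⟨_, ⟨l.reverse, by simpa using hl, -N, rfl⟩, fun x => ?_⟩
  simp only [listComp_add_int hlift, listComp_reverse_listComp hinv]
  push_cast
  ring

theorem exists_coe_listComp_eq_of_isFixedPt (hΨ : IsWordLift f Ψ) {z : ℝ} (hz : IsFixedPt Ψ z) :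
    ∃ l : List (Fin k), l ≠ [] ∧ ((listComp f l z : ℝ) : AddCircle (1 : ℝ)) = z ∧
      deriv (listComp f l) z = deriv Ψ z := by
  obtain ⟨l, hl, N, rfl⟩ := hΨ
  refine ⟨l, hl, AddCircle.coe_eq_coe_iff_exists_int.mpr ⟨-N, ?_⟩, (deriv_add_const _).symm⟩
  have : listComp f l z + N = z := hz
  push_cast
  linarith

end IsWordLift

theorem exists_isWordLift_dist_lt {k : ℕ} {f : Fin k → ℝ → ℝ} {x : ℝ}
    (hx : Dense {z : AddCircle (1 : ℝ) |
      ∃ l : List (Fin k), l ≠ [] ∧ z = ((listComp f l x : ℝ) : AddCircle (1 : ℝ))})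
    (y : ℝ) {ρ : ℝ} (hρ : 0 < ρ) : ∃ c, IsWordLift f c ∧ dist (c x) y < ρ := by
  obtain ⟨z, hzy, l, hl, hz⟩ :=
    Metric.dense_iff.mp (QuotientAddGroup.dense_preimage_mk.mpr hx) y ρ hρ
  obtain ⟨n, hn⟩ := AddCircle.coe_eq_coe_iff_exists_int.mp hz
  exact ⟨fun t => listComp f l t + n, ⟨l, hl, n, rfl⟩, by simpa only [← hn, mem_ball] using hzy⟩

theorem dense_hyperbolic_attracting_periodic_points_general
    {k : ℕ} (f finv : Fin k → ℝ → ℝ)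
    (hf : ∀ i, ContDiff ℝ 1 (f i))
    (hlift : ∀ i x, f i (x + 1) = f i x + 1)
    (hinv₂ : ∀ i x, f i (finv i x) = x)
    -- forward minimality of the IFS on the circle
    (hfwd : ∀ x : ℝ, Dense {z : AddCircle (1 : ℝ) |
      ∃ l : List (Fin k), l ≠ [] ∧ z = ((listComp f l x : ℝ) : AddCircle (1 : ℝ))})
    -- backward minimality of the IFS on the circle
    (hbwd : ∀ x : ℝ, Dense {z : AddCircle (1 : ℝ) |
      ∃ l : List (Fin k), l ≠ [] ∧ z = ((listComp finv l x : ℝ) : AddCircle (1 : ℝ))})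
    -- there exists a hyperbolic attracting periodic point of the IFS
    (hexists : ∃ (l : List (Fin k)) (x : ℝ), l ≠ [] ∧
      ((listComp f l x : ℝ) : AddCircle (1 : ℝ)) = ((x : ℝ) : AddCircle (1 : ℝ)) ∧
      |deriv (listComp f l) x| < 1) :
    Dense {q : AddCircle (1 : ℝ) | ∃ (l : List (Fin k)) (x : ℝ), l ≠ [] ∧
      ((x : ℝ) : AddCircle (1 : ℝ)) = q ∧
      ((listComp f l x : ℝ) : AddCircle (1 : ℝ)) = q ∧
      |deriv (listComp f l) x| < 1} := by
  obtain ⟨l₀, x₀, hl₀, hper, hder⟩ := hexists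
  obtain ⟨m, hm⟩ := AddCircle.coe_eq_coe_iff_exists_int.mp hper
  set H : ℝ → ℝ := fun x => listComp f l₀ x + (-m : ℤ)
  have hH : IsWordLift f H := ⟨l₀, hl₀, -m, rfl⟩
  have hHx₀ : IsFixedPt H x₀ := by simp [H, IsFixedPt, hm]
  have hHder : |deriv H x₀| < 1 := by rwa [deriv_add_const]
  rw [← QuotientAddGroup.dense_preimage_mk, Metric.dense_iff]
  intro q ε hε
  obtain ⟨b, hb, hbq⟩ := exists_isWordLift_dist_lt (hbwd x₀) q (half_pos hε)
  obtain ⟨g, hg, hgb⟩ := hb.exists_leftInverse hlift hinv₂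
  obtain ⟨c, hc, n, z, hz, hfix, hderiv⟩ := exists_comp_iterate_comp_isFixedPt
    (hH.contDiff hf) hHx₀ hHder (hg.contDiff hf) (hgb x₀) (half_pos hε) fun ρ hρ =>
      (exists_isWordLift_dist_lt (hfwd x₀) (b x₀) hρ).imp fun c hc =>
        ⟨hc.1, hc.1.contDiff hf, hc.2⟩
  obtain ⟨L, hL, hLz, hLder⟩ :=
    (hc.comp hlift (hH.iterate_comp hlift hg n)).exists_coe_listComp_eq_of_isFixedPt hfix
  refine ⟨z, ?_, L, z, hL, rfl, hLz, hLder ▸ hderiv⟩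
  calc dist z q ≤ dist z (b x₀) + dist (b x₀) q := dist_triangle _ _ _
    _ < ε / 2 + ε / 2 := add_lt_add hz hbq
    _ = ε := add_halves ε

/-- Circle diffeomorphisms are represented by their degree-one lifts. -/
theorem dense_hyperbolic_attracting_periodic_points
    {k : ℕ} (f finv : Fin k → ℝ → ℝ)
    (hf : ∀ i, ContDiff ℝ 1 (f i)) (hfinv : ∀ i, ContDiff ℝ 1 (finv i))
    (hmono : ∀ i, StrictMono (f i))
    (hlift : ∀ i x, f i (x + 1) = f i x + 1)
    (hinv₁ : ∀ i x, finv i (f i x) = x) (hinv₂ : ∀ i x, f i (finv i x) = x)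
    -- forward minimality of the IFS on the circle
    (hfwd : ∀ x : ℝ, Dense {z : AddCircle (1 : ℝ) |
      ∃ l : List (Fin k), l ≠ [] ∧ z = ((listComp f l x : ℝ) : AddCircle (1 : ℝ))})
    -- backward minimality of the IFS on the circle
    (hbwd : ∀ x : ℝ, Dense {z : AddCircle (1 : ℝ) |
      ∃ l : List (Fin k), l ≠ [] ∧ z = ((listComp finv l x : ℝ) : AddCircle (1 : ℝ))})
    -- there exists a hyperbolic attracting periodic point of the IFS
    (hexists : ∃ (l : List (Fin k)) (x : ℝ), l ≠ [] ∧
      ((listComp f l x : ℝ) : AddCircle (1 : ℝ)) = ((x : ℝ) : AddCircle (1 : ℝ)) ∧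
      |deriv (listComp f l) x| < 1) :
    Dense {q : AddCircle (1 : ℝ) | ∃ (l : List (Fin k)) (x : ℝ), l ≠ [] ∧
      ((x : ℝ) : AddCircle (1 : ℝ)) = q ∧
      ((listComp f l x : ℝ) : AddCircle (1 : ℝ)) = q ∧
      |deriv (listComp f l) x| < 1} :=
  dense_hyperbolic_attracting_periodic_points_general f finv hf hlift hinv₂ hfwd hbwd hexists
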